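/- Assume the rainbow-subgraph setup: c is an edge-coloring of the complete graph K_n containing no rainbow copy of (t+2)K_3 (t ≥ 0); G is a spanning subgraph of K_n that is rainbow under c and contains exactly one edge of every color used by c; M is a family of t+1 pairwise vertex-disjoint triangles in G; D is the induced subgraph of G on the vertices not covered by M; and X is a set of vertices of D that is independent in D such that any two distinct vertices of X have at least 4 common neighbors in D. Then for any two distinct vertices u, v ∈ X, the color c(uv) equals c(e) for some edge e of a triangle of M. -/

import Mathlib

/-!
Suppose `c(uv)` is not a colour of `M`, and let `e = xy` be the edge of `G` of colour `c(uv)`.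
Since `u` and `v` have more than two common neighbours in `D`, one of them, `w`, is not an
endpoint of `e`. Then `M` together with the triangle `uvw` is a rainbow `(t+2)K₃` in `K_n`: its
edges, with `uv` replaced by `e`, are pairwise distinct edges of the rainbow graph `G`.
-/

/-- `G` contains `k` pairwise vertex-disjoint triangles whose `3k` edges receive pairwise
distinct colors under `c`: a rainbow copy of `k·K₃`. -/
def RainbowIndepTrianglesIn {V : Type*} (G : SimpleGraph V) (k : ℕ)
    (c : Sym2 V → ℕ) : Prop :=
  ∃ f : Fin k → Fin 3 → V,
    Function.Injective (fun p : Fin k × Fin 3 => f p.1 p.2) ∧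
    (∀ i, G.Adj (f i 0) (f i 1) ∧ G.Adj (f i 1) (f i 2) ∧ G.Adj (f i 0) (f i 2)) ∧
    Function.Injective (fun p : Fin k × Fin 3 => c s(f p.1 p.2, f p.1 (p.2 + 1)))

open Function

theorem Fin.injective_uncurry_snoc {k : ℕ} {α β : Type*} {F : Fin k → α → β} {g : α → β}
    (hF : Injective fun p : Fin k × α => F p.1 p.2) (hg : Injective g)
    (hFg : ∀ i a b, F i a ≠ g b) :
    Injective fun p : Fin (k + 1) × α => (Fin.snoc F g : Fin (k + 1) → α → β) p.1 p.2 := by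
  rintro ⟨i, a⟩ ⟨i', a'⟩ h
  induction i using Fin.lastCases <;> induction i' using Fin.lastCases <;>
    simp only [Fin.snoc_castSucc, Fin.snoc_last] at h
  · rw [hg h]
  · exact absurd h.symm (hFg _ _ _)
  · exact absurd h (hFg _ _ _)
  · cases hF (a₁ := (_, a)) (a₂ := (_, a')) h
    rfl

theorem injective_vec3 {α : Type*} {a b c : α} (hab : a ≠ b) (hac : a ≠ c) (hbc : b ≠ c) :
    Injective ![a, b, c] := by
  intro i j h
  fin_cases i <;> fin_cases j <;> simp_all [eq_comm]

theorem Set.exists_mem_notMem_sym2_of_two_lt_ncard {V : Type*} {s : Set V} (hs : 2 < s.ncard)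
    (e : Sym2 V) : ∃ w ∈ s, w ∉ e := by
  induction e using Sym2.ind with | _ x y => ?_
  obtain ⟨w, hw, hwxy⟩ := Set.exists_mem_notMem_of_ncard_lt_ncard
    ((Set.ncard_insert_le x {y}).trans_lt (by simpa using hs))
  exact ⟨w, hw, by simpa [Sym2.mem_iff] using hwxy⟩

namespace SimpleGraph

variable {V : Type*} {G H : SimpleGraph V}

def IsTriangle (G : SimpleGraph V) (g : Fin 3 → V) : Prop :=
  G.Adj (g 0) (g 1) ∧ G.Adj (g 1) (g 2) ∧ G.Adj (g 0) (g 2)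

theorem IsTriangle.mono {g : Fin 3 → V} (hGH : G ≤ H) (hg : G.IsTriangle g) : H.IsTriangle g :=
  ⟨hGH hg.1, hGH hg.2.1, hGH hg.2.2⟩

theorem IsTriangle.edge_mem_edgeSet {g : Fin 3 → V} (hg : G.IsTriangle g) (j : Fin 3) :
    s(g j, g (j + 1)) ∈ G.edgeSet := by
  fin_cases j
  exacts [hg.1, hg.2.1, hg.2.2.symm]

end SimpleGraph

section Triangles

variable {V : Type*} {k : ℕ}

theorem injective_triangle_edges {f : Fin k → Fin 3 → V}
    (hf : Injective fun p : Fin k × Fin 3 => f p.1 p.2) :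
    Injective fun p : Fin k × Fin 3 => s(f p.1 p.2, f p.1 (p.2 + 1)) := by
  rintro ⟨i, j⟩ ⟨i', j'⟩ h
  rcases Sym2.eq_iff.mp h with ⟨h₁, -⟩ | ⟨h₁, h₂⟩
  · exact hf h₁
  · -- the vertex pairs would have to be swapped, forcing `j = j + 2` in `Fin 3`
    have e₁ := hf (a₁ := (i, j)) (a₂ := (i', j' + 1)) h₁
    have e₂ := hf (a₁ := (i, j + 1)) (a₂ := (i', j')) h₂
    simp only [Prod.mk.injEq] at e₁ e₂
    have hj : j = j + 1 + 1 := e₂.2 ▸ e₁.2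
    exact absurd hj (by fin_cases j <;> decide)

theorem rainbowIndepTrianglesIn_of_injective_edges {G H : SimpleGraph V} {c : Sym2 V → ℕ}
    (hc : Set.InjOn c G.edgeSet) (f : Fin k → Fin 3 → V) (E : Fin k × Fin 3 → Sym2 V)
    (hf : Injective fun p : Fin k × Fin 3 => f p.1 p.2) (hfH : ∀ i, H.IsTriangle (f i))
    (hE : Injective E) (hEG : ∀ p, E p ∈ G.edgeSet)
    (hcE : ∀ p : Fin k × Fin 3, c (E p) = c s(f p.1 p.2, f p.1 (p.2 + 1))) :
    RainbowIndepTrianglesIn H k c :=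
  ⟨f, hf, hfH, fun p q h => hE (hc (hEG p) (hEG q) (by rw [hcE, hcE]; exact h))⟩

theorem rainbowIndepTrianglesIn_top_snoc {G : SimpleGraph V} {c : Sym2 V → ℕ}
    (hc : Set.InjOn c G.edgeSet) {f : Fin k → Fin 3 → V}
    (hf : Injective fun p : Fin k × Fin 3 => f p.1 p.2) (hfG : ∀ i, G.IsTriangle (f i))
    {u v w : V} (huv : u ≠ v) (hvw : G.Adj v w) (hwu : G.Adj w u)
    (hfuvw : ∀ i j j', f i j ≠ ![u, v, w] j')
    {e : Sym2 V} (he : e ∈ G.edgeSet) (hce : c e = c s(u, v)) (hwe : w ∉ e)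
    (heM : ∀ i j, s(f i j, f i (j + 1)) ≠ e) :
    RainbowIndepTrianglesIn ⊤ (k + 1) c := by
  have hwM : ∀ i j, w ∉ s(f i j, f i (j + 1)) := fun i j hw => by
    rcases Sym2.mem_iff.mp hw with h | h
    exacts [hfuvw i j 2 h.symm, hfuvw i (j + 1) 2 h.symm]
  refine rainbowIndepTrianglesIn_of_injective_edges hc (Fin.snoc f ![u, v, w])
    (fun p => (Fin.snoc (fun i j => s(f i j, f i (j + 1))) ![e, s(v, w), s(w, u)] :
      Fin (k + 1) → Fin 3 → Sym2 V) p.1 p.2) ?_ ?_ ?_ ?_ ?_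
  · exact Fin.injective_uncurry_snoc hf (injective_vec3 huv hwu.ne' hvw.ne) hfuvw
  · refine Fin.lastCases ?_ fun i => ?_
    · simpa [SimpleGraph.IsTriangle] using ⟨huv, hvw.ne, hwu.ne'⟩
    · simpa using (hfG i).mono le_top
  · refine Fin.injective_uncurry_snoc (injective_triangle_edges hf)
      (injective_vec3 (ne_of_mem_of_not_mem' (Sym2.mem_mk_right v w) hwe).symm
        (ne_of_mem_of_not_mem' (Sym2.mem_mk_left w u) hwe).symm ?_) fun i j j' => ?_
    · simp [huv.symm, hvw.ne]
    · fin_cases j'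
      exacts [heM i j, ne_of_mem_of_not_mem' (Sym2.mem_mk_right v w) (hwM i j) |>.symm,
        ne_of_mem_of_not_mem' (Sym2.mem_mk_left w u) (hwM i j) |>.symm]
  · rintro ⟨i, j⟩
    induction i using Fin.lastCases with
    | last => fin_cases j <;> simp [he, hvw, hwu]
    | cast i => simpa using (hfG i).edge_mem_edgeSet j
  · rintro ⟨i, j⟩
    induction i using Fin.lastCases with
    | last => fin_cases j <;> simp [hce]
    | cast i => simp

end Triangles

theorem color_of_X_pair_is_M_color_general (t n : ℕ) (c : Sym2 (Fin n) → ℕ)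
    -- the coloring `c` of `K_n` admits no rainbow `(t+2)K₃`
    (hnoRainbow : ¬ RainbowIndepTrianglesIn (⊤ : SimpleGraph (Fin n)) (t + 2) c)
    -- `G` is a (spanning) rainbow subgraph of `K_n` with one edge of each used color
    (G : SimpleGraph (Fin n))
    (hGrainbow : ∀ e ∈ G.edgeSet, ∀ e' ∈ G.edgeSet, c e = c e' → e = e')
    (hGcolors : ∀ e ∈ (⊤ : SimpleGraph (Fin n)).edgeSet, ∃ e' ∈ G.edgeSet, c e' = c e)
    -- `M` is a family of `t+1` pairwise vertex-disjoint triangles of `G`, given by `f`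
    (f : Fin (t + 1) → Fin 3 → Fin n)
    (hinj : Function.Injective fun p : Fin (t + 1) × Fin 3 => f p.1 p.2)
    (htri : ∀ i, G.Adj (f i 0) (f i 1) ∧ G.Adj (f i 1) (f i 2) ∧ G.Adj (f i 0) (f i 2))
    -- `Dset` is the vertex set of `D`, the induced subgraph on vertices not covered by `M`
    (Dset : Set (Fin n)) (hDset : Dset = {x | ∀ i j, f i j ≠ x})
    -- `X ⊆ V(D)` is independent in `D`, any two of its vertices having
    -- at least `4` common neighbors in `D`
    (X : Set (Fin n)) (hXD : X ⊆ Dset)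
    (hXcn : ∀ u ∈ X, ∀ v ∈ X, u ≠ v →
      4 ≤ (G.neighborSet u ∩ G.neighborSet v ∩ Dset).ncard)
    :
    ∀ u ∈ X, ∀ v ∈ X, u ≠ v →
      ∃ i : Fin (t + 1), ∃ j k : Fin 3, j ≠ k ∧ c s(u, v) = c s(f i j, f i k) := by
  intro u hu v hv huv
  by_contra! hnew
  subst hDset
  obtain ⟨e, he, hce⟩ := hGcolors s(u, v) (by simpa using huv)
  obtain ⟨w, ⟨⟨huw, hvw⟩, hwD⟩, hwe⟩ :=
    Set.exists_mem_notMem_sym2_of_two_lt_ncard (by linarith [hXcn u hu v hv huv]) e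
  have huvwD : ∀ j, ![u, v, w] j ∈ {x | ∀ i j, f i j ≠ x} := by
    intro j
    fin_cases j
    exacts [hXD hu, hXD hv, hwD]
  have heM : ∀ i j, s(f i j, f i (j + 1)) ≠ e := fun i j hM =>
    hnew i j (j + 1) (by fin_cases j <;> decide) (by rw [← hce, hM])
  exact hnoRainbow (rainbowIndepTrianglesIn_top_snoc hGrainbow hinj htri huv hvw huw.symm
    (fun i j j' => huvwD j' i j) he hce hwe heM)

/-- Claim 2: in the rainbow-subgraph setup, the color of any edge between two vertices of
`X` is the color of an edge of some triangle of `M`. -/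
theorem color_of_X_pair_is_M_color (t n : ℕ) (c : Sym2 (Fin n) → ℕ)
    -- the coloring `c` of `K_n` admits no rainbow `(t+2)K₃`
    (hnoRainbow : ¬ RainbowIndepTrianglesIn (⊤ : SimpleGraph (Fin n)) (t + 2) c)
    -- `G` is a (spanning) rainbow subgraph of `K_n` with one edge of each used color
    (G : SimpleGraph (Fin n))
    (hGrainbow : ∀ e ∈ G.edgeSet, ∀ e' ∈ G.edgeSet, c e = c e' → e = e')
    (hGcolors : ∀ e ∈ (⊤ : SimpleGraph (Fin n)).edgeSet, ∃ e' ∈ G.edgeSet, c e' = c e)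
    -- `M` is a family of `t+1` pairwise vertex-disjoint triangles of `G`, given by `f`
    (f : Fin (t + 1) → Fin 3 → Fin n)
    (hinj : Function.Injective fun p : Fin (t + 1) × Fin 3 => f p.1 p.2)
    (htri : ∀ i, G.Adj (f i 0) (f i 1) ∧ G.Adj (f i 1) (f i 2) ∧ G.Adj (f i 0) (f i 2))
    -- `Dset` is the vertex set of `D`, the induced subgraph on vertices not covered by `M`
    (Dset : Set (Fin n)) (hDset : Dset = {x | ∀ i j, f i j ≠ x})
    -- `X ⊆ V(D)` is independent in `D`, any two of its vertices having
    -- at least `4` common neighbors in `D`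
    (X : Set (Fin n)) (hXD : X ⊆ Dset)
    (hXind : ∀ u ∈ X, ∀ v ∈ X, u ≠ v → ¬ G.Adj u v)
    (hXcn : ∀ u ∈ X, ∀ v ∈ X, u ≠ v →
      4 ≤ (G.neighborSet u ∩ G.neighborSet v ∩ Dset).ncard)
    :
    ∀ u ∈ X, ∀ v ∈ X, u ≠ v →
      ∃ i : Fin (t + 1), ∃ j k : Fin 3, j ≠ k ∧ c s(u, v) = c s(f i j, f i k) :=
  color_of_X_pair_is_M_color_general t n c hnoRainbow G hGrainbow hGcolors f hinj htri Dset hDset X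
    hXD hXcn
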